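/- The point (0,0) is a fixed point of F_η; the Jacobian of F_η at (0,0) equals the 2×2 real matrix [[1, −η(2γ−1) n_e (x_s−x_t)/2], [η(2γ−1) n_d (x_s−x_t)/2, 1 − η²(2γ−1)² n_e n_d (x_s−x_t)²/4]]; setting α = ((2γ−1)η/2)√(n_e n_d)·|x_s − x_t|, its complex eigenvalues are 1 − α²/2 ± √((1 − α²/2)² − 1) with product equal to 1; and both eigenvalues have modulus exactly 1 if and only if η ≤ 4/((2γ−1)√(n_e n_d)·|x_s − x_t|), while some eigenvalue has modulus strictly greater than 1 otherwise. Since 1/(2γ−1) ≥ 1, the admissible learning-rate range is larger than that of unsmoothed alternating gradient descent DANN by the factor 1/(2γ−1). -/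

import Mathlib

/-!
The objective depends on `(θe, θd)` only through `u = θd θe`, say `d = g (θd θe)`. At the origin
an encoder step therefore linearises to the shear `[[1, -η c], [0, 1]]` and a discriminator step
to `[[1, 0], [η c, 1]]`, where `c = g'(0) = (2γ - 1)(xs - xt)/2`. Composing their `n_e`-th and
`n_d`-th powers gives the Jacobian, of determinant `1` and trace `2 - α²`. Its eigenvalues are
the roots of `μ² - 2βμ + 1` with `β = 1 - α²/2`: they lie on the unit circle when `|β| ≤ 1`,
i.e. `α ≤ 2`, and otherwise they are real with product `1`, so one of them has modulus `> 1`.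
-/

open Real

noncomputable def logSigmoid (t : ℝ) : ℝ := log (sigmoid t)

theorem hasDerivAt_logSigmoid (t : ℝ) : HasDerivAt logSigmoid (sigmoid (-t)) t := by
  refine ((hasDerivAt_sigmoid t).log (sigmoid_pos t).ne').congr_deriv ?_
  rw [sigmoid_neg]
  field_simp [(sigmoid_pos t).ne']

theorem contDiff_logSigmoid : ContDiff ℝ 2 logSigmoid :=
  (contDiff_sigmoid.of_le le_top).log fun t => (sigmoid_pos t).ne'

noncomputable def smoothedLogisticLoss (γ v : ℝ) : ℝ :=
  γ * logSigmoid v + (1 - γ) * logSigmoid (-v)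

theorem hasDerivAt_smoothedLogisticLoss (γ v : ℝ) :
    HasDerivAt (smoothedLogisticLoss γ) (γ * sigmoid (-v) - (1 - γ) * sigmoid v) v := by
  have hneg := (hasDerivAt_logSigmoid (-v)).comp v (hasDerivAt_neg v)
  refine (((hasDerivAt_logSigmoid v).const_mul γ).add (hneg.const_mul (1 - γ))).congr_deriv ?_
  rw [neg_neg]
  ring

theorem contDiff_smoothedLogisticLoss (γ : ℝ) : ContDiff ℝ 2 (smoothedLogisticLoss γ) :=
  (contDiff_const.mul contDiff_logSigmoid).add
    (contDiff_const.mul (contDiff_logSigmoid.comp contDiff_neg))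

/-- `d_γ(θe, θd) = smoothedDannLoss γ xs xt (θd * θe)`, with source label `1`, target label `0`. -/
noncomputable def smoothedDannLoss (γ xs xt u : ℝ) : ℝ :=
  smoothedLogisticLoss γ (u * xs) + smoothedLogisticLoss γ (-(u * xt))

theorem smoothedDannLoss_apply (γ xs xt u : ℝ) :
    smoothedDannLoss γ xs xt u
      = γ * log (1 / (1 + exp (-(u * xs)))) + (1 - γ) * log (1 / (1 + exp (-(-(u * xs)))))
        + γ * log (1 / (1 + exp (-(-(u * xt))))) + (1 - γ) * log (1 / (1 + exp (-(u * xt)))) := by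
  simp only [smoothedDannLoss, smoothedLogisticLoss, logSigmoid, sigmoid_def, one_div, neg_neg]
  ring

theorem deriv_smoothedDannLoss_zero (γ xs xt : ℝ) :
    deriv (smoothedDannLoss γ xs xt) 0 = (2 * γ - 1) * (xs - xt) / 2 := by
  have hs := (hasDerivAt_smoothedLogisticLoss γ (0 * xs)).comp 0 ((hasDerivAt_id 0).mul_const xs)
  have ht := (hasDerivAt_smoothedLogisticLoss γ (-(0 * xt))).comp 0
    ((hasDerivAt_id 0).mul_const xt).neg
  have h : HasDerivAt (smoothedDannLoss γ xs xt) _ 0 := hs.add ht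
  rw [h.deriv]
  simp only [zero_mul, neg_zero, sigmoid_zero]
  ring

theorem contDiff_smoothedDannLoss (γ xs xt : ℝ) : ContDiff ℝ 2 (smoothedDannLoss γ xs xt) :=
  ((contDiff_smoothedLogisticLoss γ).comp (contDiff_id.mul contDiff_const)).add
    ((contDiff_smoothedLogisticLoss γ).comp (contDiff_id.mul contDiff_const).neg)

noncomputable def mat2CLM (a b c d : ℝ) : ℝ × ℝ →L[ℝ] ℝ × ℝ :=
  open ContinuousLinearMap in
  (a • fst ℝ ℝ ℝ + b • snd ℝ ℝ ℝ).prod (c • fst ℝ ℝ ℝ + d • snd ℝ ℝ ℝ)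

@[simp]
theorem mat2CLM_apply (a b c d : ℝ) (v : ℝ × ℝ) :
    mat2CLM a b c d v = (a * v.1 + b * v.2, c * v.1 + d * v.2) := by
  simp [mat2CLM]

theorem mat2CLM_mul (a b c d a' b' c' d' : ℝ) :
    mat2CLM a b c d * mat2CLM a' b' c' d'
      = mat2CLM (a * a' + b * c') (a * b' + b * d') (c * a' + d * c') (c * b' + d * d') := by
  ext <;> simp

theorem mat2CLM_one : mat2CLM 1 0 0 1 = 1 := by
  ext <;> simp

theorem mat2CLM_upper_pow (b : ℝ) (n : ℕ) : mat2CLM 1 b 0 1 ^ n = mat2CLM 1 (n * b) 0 1 := by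
  induction n with
  | zero => simp [mat2CLM_one]
  | succ n ih => rw [pow_succ, ih, mat2CLM_mul]; congr 1 <;> push_cast <;> ring

theorem mat2CLM_lower_pow (c : ℝ) (n : ℕ) : mat2CLM 1 0 c 1 ^ n = mat2CLM 1 0 (n * c) 1 := by
  induction n with
  | zero => simp [mat2CLM_one]
  | succ n ih => rw [pow_succ, ih, mat2CLM_mul]; congr 1 <;> push_cast <;> ring

section AlternatingGD

variable (d : ℝ → ℝ → ℝ) (η : ℝ)

noncomputable def encoderStep (θ : ℝ × ℝ) : ℝ × ℝ :=
  (θ.1 - η * deriv (fun a => d a θ.2) θ.1, θ.2)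

noncomputable def discriminatorStep (θ : ℝ × ℝ) : ℝ × ℝ :=
  (θ.1, θ.2 + η * deriv (fun b => d θ.1 b) θ.2)

noncomputable def alternatingGD (ne nd : ℕ) : ℝ × ℝ → ℝ × ℝ :=
  (discriminatorStep d η)^[nd] ∘ (encoderStep d η)^[ne]

end AlternatingGD

section ProductObjective

variable (g : ℝ → ℝ) (η : ℝ)

theorem encoderStep_comp_mul (θ : ℝ × ℝ) :
    encoderStep (fun a b => g (b * a)) η θ
      = (θ.1 - η * (θ.2 * deriv g (θ.2 * θ.1)), θ.2) := by
  simp only [encoderStep, deriv_comp_mul_left, smul_eq_mul]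

theorem discriminatorStep_comp_mul (θ : ℝ × ℝ) :
    discriminatorStep (fun a b => g (b * a)) η θ
      = (θ.1, θ.2 + η * (θ.1 * deriv g (θ.2 * θ.1))) := by
  simp only [discriminatorStep, mul_comm _ θ.1, deriv_comp_mul_left, smul_eq_mul]

theorem encoderStep_comp_mul_zero : encoderStep (fun a b => g (b * a)) η 0 = 0 := by
  simp [encoderStep_comp_mul]

theorem discriminatorStep_comp_mul_zero : discriminatorStep (fun a b => g (b * a)) η 0 = 0 := by
  simp [discriminatorStep_comp_mul]

theorem alternatingGD_comp_mul_zero (ne nd : ℕ) :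
    alternatingGD (fun a b => g (b * a)) η ne nd 0 = 0 := by
  simp only [alternatingGD, Function.comp_apply,
    Function.iterate_fixed (encoderStep_comp_mul_zero g η),
    Function.iterate_fixed (discriminatorStep_comp_mul_zero g η)]

variable {g}

theorem differentiableAt_deriv_comp_snd_mul_fst (hg : DifferentiableAt ℝ (deriv g) 0) :
    DifferentiableAt ℝ (fun θ : ℝ × ℝ => deriv g (θ.2 * θ.1)) 0 :=
  DifferentiableAt.comp (g := deriv g) (0 : ℝ × ℝ) (by simpa using hg) (by fun_prop)

theorem hasFDerivAt_encoderStep_comp_mul (hg : DifferentiableAt ℝ (deriv g) 0) :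
    HasFDerivAt (encoderStep (fun a b => g (b * a)) η)
      (mat2CLM 1 (-(η * deriv g 0)) 0 1) 0 := by
  have hh := (differentiableAt_deriv_comp_snd_mul_fst hg).hasFDerivAt
  rw [funext (encoderStep_comp_mul g η)]
  refine ((hasFDerivAt_fst.sub ((hasFDerivAt_snd.mul hh).const_mul η)).prodMk
    hasFDerivAt_snd).congr_fderiv ?_
  ext <;> simp

theorem hasFDerivAt_discriminatorStep_comp_mul (hg : DifferentiableAt ℝ (deriv g) 0) :
    HasFDerivAt (discriminatorStep (fun a b => g (b * a)) η)
      (mat2CLM 1 0 (η * deriv g 0) 1) 0 := by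
  have hh := (differentiableAt_deriv_comp_snd_mul_fst hg).hasFDerivAt
  rw [funext (discriminatorStep_comp_mul g η)]
  refine (hasFDerivAt_fst.prodMk
    (hasFDerivAt_snd.add ((hasFDerivAt_fst.mul hh).const_mul η))).congr_fderiv ?_
  ext <;> simp

theorem hasFDerivAt_alternatingGD_comp_mul (hg : DifferentiableAt ℝ (deriv g) 0) (ne nd : ℕ) :
    HasFDerivAt (alternatingGD (fun a b => g (b * a)) η ne nd)
      (mat2CLM 1 (-(ne * (η * deriv g 0))) (nd * (η * deriv g 0))
        (1 - ne * nd * (η * deriv g 0) ^ 2)) 0 := by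
  have hE := (hasFDerivAt_encoderStep_comp_mul η hg).iterate (encoderStep_comp_mul_zero g η) ne
  have hD := (hasFDerivAt_discriminatorStep_comp_mul η hg).iterate
    (discriminatorStep_comp_mul_zero g η) nd
  rw [← Function.iterate_fixed (encoderStep_comp_mul_zero g η) ne] at hD
  refine (hD.comp 0 hE).congr_fderiv ?_
  rw [← ContinuousLinearMap.mul_def, mat2CLM_upper_pow, mat2CLM_lower_pow, mat2CLM_mul]
  congr 1 <;> ring

end ProductObjective

theorem norm_eq_one_of_sq_sub_two_mul_add_one_eq_zero {β : ℝ} (hβ : |β| ≤ 1) {μ : ℂ}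
    (hμ : μ ^ 2 - 2 * β * μ + 1 = 0) : ‖μ‖ = 1 := by
  have hre := congrArg Complex.re hμ
  have him := congrArg Complex.im hμ
  simp only [sq, Complex.add_re, Complex.sub_re, Complex.mul_re, Complex.add_im, Complex.sub_im,
    Complex.mul_im, Complex.ofReal_re, Complex.ofReal_im, Complex.re_ofNat, Complex.im_ofNat,
    Complex.one_re, Complex.one_im, Complex.zero_re, Complex.zero_im] at hre him
  have hsq : μ.re ^ 2 + μ.im ^ 2 = 1 := by
    rcases mul_eq_zero.mp (show μ.im * (μ.re - β) = 0 by linear_combination him / 2) with h | h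
    · have hβ2 : β ^ 2 ≤ 1 := by nlinarith [abs_le.mp hβ]
      rw [h] at hre ⊢
      nlinarith [sq_nonneg (μ.re - β)]
    · rw [sub_eq_zero] at h
      rw [h] at hre ⊢
      linear_combination -hre
  rw [Complex.norm_eq_sqrt_sq_add_sq, hsq, Real.sqrt_one]

theorem exists_one_lt_norm_of_sq_sub_two_mul_add_one_eq_zero {β : ℝ} (hβ : 1 < |β|) :
    ∃ μ : ℂ, μ ^ 2 - 2 * β * μ + 1 = 0 ∧ 1 < ‖μ‖ := by
  have hs := Real.sq_sqrt (show 0 ≤ β ^ 2 - 1 by nlinarith [sq_abs β, abs_nonneg β])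
  have hs0 := Real.sqrt_nonneg (β ^ 2 - 1)
  have hroot : ∀ r : ℝ, (r - β) ^ 2 = β ^ 2 - 1 → (r : ℂ) ^ 2 - 2 * β * r + 1 = 0 := by
    intro r hr
    exact_mod_cast (by linear_combination hr : r ^ 2 - 2 * β * r + 1 = 0)
  rcases lt_abs.mp hβ with h | h
  · refine ⟨(β + √(β ^ 2 - 1) : ℝ), hroot _ (by linear_combination hs), ?_⟩
    rw [Complex.norm_real, Real.norm_eq_abs, abs_of_pos (by linarith)]
    linarith
  · refine ⟨(β - √(β ^ 2 - 1) : ℝ), hroot _ (by linear_combination hs), ?_⟩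
    rw [Complex.norm_real, Real.norm_eq_abs, abs_of_neg (by linarith)]
    linarith

namespace Matrix

theorem mem_spectrum_map_ofReal_fin_two_iff (A : Matrix (Fin 2) (Fin 2) ℝ) (μ : ℂ) :
    μ ∈ spectrum ℂ (A.map ((↑) : ℝ → ℂ)) ↔ μ ^ 2 - A.trace * μ + A.det = 0 := by
  rw [spectrum.mem_iff, isUnit_iff_isUnit_det, isUnit_iff_ne_zero, not_not,
    det_fin_two, A.det_fin_two, A.trace_fin_two]
  simp only [sub_apply, algebraMap_matrix_apply, map_apply, Algebra.algebraMap_self,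
    RingHom.id_apply]
  push_cast
  constructor <;> intro h <;> linear_combination h

variable {A : Matrix (Fin 2) (Fin 2) ℝ} {β : ℝ}

theorem mem_spectrum_map_ofReal_iff_of_det_eq_one (htr : A.trace = 2 * β) (hdet : A.det = 1)
    (μ : ℂ) : μ ∈ spectrum ℂ (A.map ((↑) : ℝ → ℂ)) ↔ μ ^ 2 - 2 * β * μ + 1 = 0 := by
  rw [A.mem_spectrum_map_ofReal_fin_two_iff, htr, hdet]
  push_cast
  rfl

theorem spectrum_map_ofReal_eq_of_det_eq_one (htr : A.trace = 2 * β) (hdet : A.det = 1)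
    {w : ℂ} (hw : w ^ 2 = β ^ 2 - 1) :
    spectrum ℂ (A.map ((↑) : ℝ → ℂ)) = {β + w, β - w} := by
  ext μ
  rw [mem_spectrum_map_ofReal_iff_of_det_eq_one htr hdet,
    show μ ^ 2 - 2 * β * μ + 1 = (μ - (β + w)) * (μ - (β - w)) by linear_combination hw,
    mul_eq_zero, sub_eq_zero, sub_eq_zero]
  rfl

theorem exists_mem_spectrum_map_ofReal_one_lt_norm (htr : A.trace = 2 * β) (hdet : A.det = 1)
    (hβ : 1 < |β|) : ∃ μ ∈ spectrum ℂ (A.map ((↑) : ℝ → ℂ)), 1 < ‖μ‖ := by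
  simp only [mem_spectrum_map_ofReal_iff_of_det_eq_one htr hdet]
  exact exists_one_lt_norm_of_sq_sub_two_mul_add_one_eq_zero hβ

theorem forall_mem_spectrum_map_ofReal_norm_eq_one_iff (htr : A.trace = 2 * β)
    (hdet : A.det = 1) : (∀ μ ∈ spectrum ℂ (A.map ((↑) : ℝ → ℂ)), ‖μ‖ = 1) ↔ |β| ≤ 1 := by
  refine ⟨fun h => ?_, fun hβ μ hμ => ?_⟩
  · by_contra! hβ
    obtain ⟨μ, hμ, hlt⟩ := exists_mem_spectrum_map_ofReal_one_lt_norm htr hdet hβ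
    exact hlt.ne' (h μ hμ)
  · rw [mem_spectrum_map_ofReal_iff_of_det_eq_one htr hdet] at hμ
    exact norm_eq_one_of_sq_sub_two_mul_add_one_eq_zero hβ hμ

end Matrix

theorem abs_one_sub_sq_div_two_le_one_iff_le_div {η T : ℝ} (hη : 0 ≤ η) (hT : 0 < T) :
    |1 - (η * T / 2) ^ 2 / 2| ≤ 1 ↔ η ≤ 4 / T := by
  rw [abs_le, le_div_iff₀ hT]
  have hηT : 0 ≤ η * T := mul_nonneg hη hT.le
  constructor
  · intro h; nlinarith [h.1]
  · intro h; constructor <;> nlinarith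

/-- For the environment-label-smoothed toy DANN objective
`d_γ(θe,θd) = γ f(θd θe x_s) + (1−γ) f(−θd θe x_s) + γ f(−θd θe x_t) + (1−γ) f(θd θe x_t)`
with γ ∈ (1/2,1], the combined alternating-GD operator fixes (0,0); its Jacobian there is
`[[1, −η(2γ−1) n_e (x_s−x_t)/2], [η(2γ−1) n_d (x_s−x_t)/2, 1 − η²(2γ−1)² n_e n_d (x_s−x_t)²/4]]`;
with `α = ((2γ−1)η/2)√(n_e n_d)|x_s − x_t|` the complex eigenvalues are
`1 − α²/2 ± √((1 − α²/2)² − 1)` with product 1; both have modulus exactly 1 iff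
`η ≤ 4/((2γ−1)√(n_e n_d)|x_s − x_t|)`, otherwise some eigenvalue has modulus > 1; and since
`1/(2γ−1) ≥ 1`, the admissible learning-rate threshold is at least that of the unsmoothed
alternating GD DANN. -/
theorem stmt15 (xs xt : ℝ) (hx : xs ≠ xt) (η : ℝ) (hη : 0 < η)
    (γ : ℝ) (hγ : γ ∈ Set.Ioc (1/2 : ℝ) 1)
    (ne nd : ℕ) (hne : 1 ≤ ne) (hnd : 1 ≤ nd) :
    let f : ℝ → ℝ := fun t => Real.log (1 / (1 + Real.exp (-t)))
    let d : ℝ → ℝ → ℝ := fun θe θd =>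
      γ * f (θd * θe * xs) + (1 - γ) * f (-(θd * θe * xs))
        + γ * f (-(θd * θe * xt)) + (1 - γ) * f (θd * θe * xt)
    let F1 : ℝ × ℝ → ℝ × ℝ := fun θ => (θ.1 - η * deriv (fun a => d a θ.2) θ.1, θ.2)
    let F2 : ℝ × ℝ → ℝ × ℝ := fun θ => (θ.1, θ.2 + η * deriv (fun b => d θ.1 b) θ.2)
    let F : ℝ × ℝ → ℝ × ℝ := (F2^[nd]) ∘ (F1^[ne])
    let J : Matrix (Fin 2) (Fin 2) ℝ :=
      !![1, -(η * (2 * γ - 1) * (ne : ℝ) * (xs - xt) / 2);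
         η * (2 * γ - 1) * (nd : ℝ) * (xs - xt) / 2,
         1 - η ^ 2 * (2 * γ - 1) ^ 2 * (ne : ℝ) * (nd : ℝ) * (xs - xt) ^ 2 / 4]
    let Jc : Matrix (Fin 2) (Fin 2) ℂ := J.map (fun a => (a : ℂ))
    let α : ℝ := (2 * γ - 1) * η / 2 * Real.sqrt ((ne : ℝ) * (nd : ℝ)) * |xs - xt|
    F (0, 0) = (0, 0) ∧
    (∀ v : ℝ × ℝ, fderiv ℝ F (0, 0) v
        = (J 0 0 * v.1 + J 0 1 * v.2, J 1 0 * v.1 + J 1 1 * v.2)) ∧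
    (∃ w : ℂ, w ^ 2 = ((1 - α ^ 2 / 2 : ℝ) : ℂ) ^ 2 - 1 ∧
      spectrum ℂ Jc = {((1 - α ^ 2 / 2 : ℝ) : ℂ) + w, ((1 - α ^ 2 / 2 : ℝ) : ℂ) - w} ∧
      (((1 - α ^ 2 / 2 : ℝ) : ℂ) + w) * (((1 - α ^ 2 / 2 : ℝ) : ℂ) - w) = 1) ∧
    ((∀ μ ∈ spectrum ℂ Jc, ‖μ‖ = 1) ↔
        η ≤ 4 / ((2 * γ - 1) * Real.sqrt ((ne : ℝ) * (nd : ℝ)) * |xs - xt|)) ∧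
    (¬ η ≤ 4 / ((2 * γ - 1) * Real.sqrt ((ne : ℝ) * (nd : ℝ)) * |xs - xt|) →
        ∃ μ ∈ spectrum ℂ Jc, 1 < ‖μ‖) ∧
    4 / (Real.sqrt ((ne : ℝ) * (nd : ℝ)) * |xs - xt|)
      ≤ 4 / ((2 * γ - 1) * Real.sqrt ((ne : ℝ) * (nd : ℝ)) * |xs - xt|) := by
  intro f d F1 F2 F J Jc α
  have hF : F = alternatingGD (fun a b => smoothedDannLoss γ xs xt (b * a)) η ne nd := by
    simp only [F, F1, F2, d, f, ← smoothedDannLoss_apply]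
    rfl
  have hJac := hasFDerivAt_alternatingGD_comp_mul η
    ((contDiff_smoothedDannLoss γ xs xt).differentiable_deriv_two 0) ne nd
  rw [deriv_smoothedDannLoss_zero] at hJac
  have hnn : (0 : ℝ) < ne * nd := by exact_mod_cast Nat.mul_pos hne hnd
  have hsx : 0 < √((ne : ℝ) * nd) * |xs - xt| :=
    mul_pos (sqrt_pos.mpr hnn) (abs_pos.mpr (sub_ne_zero.mpr hx))
  have hT : 0 < (2 * γ - 1) * √((ne : ℝ) * nd) * |xs - xt| := by
    rw [mul_assoc]
    exact mul_pos (by linarith [hγ.1]) hsx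
  have htr : J.trace = 2 * (1 - α ^ 2 / 2) := by
    simp only [J, α, Matrix.trace_fin_two_of, mul_pow, div_pow, sq_sqrt hnn.le, sq_abs]
    ring
  have hdet : J.det = 1 := by
    rw [Matrix.det_fin_two_of]
    ring
  have hthreshold : |1 - α ^ 2 / 2| ≤ 1 ↔ η ≤ 4 / ((2 * γ - 1) * √((ne : ℝ) * nd) * |xs - xt|) := by
    rw [← abs_one_sub_sq_div_two_le_one_iff_le_div hη.le hT]
    simp only [α]
    ring_nf
  refine ⟨?_, fun v => ?_, ?_, ?_, ?_, ?_⟩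
  · rw [hF, Prod.mk_zero_zero]
    exact alternatingGD_comp_mul_zero _ η ne nd
  · rw [hF, Prod.mk_zero_zero, hJac.fderiv, mat2CLM_apply]
    simp only [J, Matrix.of_apply, Matrix.cons_val', Matrix.cons_val_zero, Matrix.cons_val_one,
      Matrix.empty_val', Matrix.cons_val_fin_one, Prod.mk.injEq]
    constructor <;> ring
  · obtain ⟨w, hw⟩ := IsAlgClosed.exists_pow_nat_eq (((1 - α ^ 2 / 2 : ℝ) : ℂ) ^ 2 - 1) two_pos
    exact ⟨w, hw, Matrix.spectrum_map_ofReal_eq_of_det_eq_one htr hdet hw,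
      by linear_combination -hw⟩
  · rw [← hthreshold]
    exact Matrix.forall_mem_spectrum_map_ofReal_norm_eq_one_iff htr hdet
  · rw [← hthreshold, not_le]
    exact Matrix.exists_mem_spectrum_map_ofReal_one_lt_norm htr hdet
  · refine div_le_div_of_nonneg_left zero_le_four hT ?_
    rw [mul_assoc]
    exact mul_le_of_le_one_left hsx.le (by linarith [hγ.2])
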